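/- arXiv:1411.4216 — 4 statements merged into one kernel-verified Lean document; each statement's English description precedes it below -/
import Mathlib

section
/- For n×n real symmetric positive semidefinite matrices A and B, det(A+B)^{1/n} ≥ det(A)^{1/n} + det(B)^{1/n}. -/
/-!
Write `A = Cᴴ C` with `C` invertible and `B = Cᴴ M C`, where `M = C⁻ᴴ B C⁻¹` is positive
semidefinite. All three determinants then carry the factor `det A`, which reduces the inequality
to `1 + det(M)^(1/n) ≤ det(1 + M)^(1/n)`. In an eigenbasis of `M` this is superadditivity of the
geometric mean, which follows from AM-GM applied to the ratios `aᵢ / (aᵢ + bᵢ)` and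
`bᵢ / (aᵢ + bᵢ)`, whose arithmetic means add up to `1`. If `A` and `B` are both singular the
inequality is trivial, and otherwise one of them is positive definite.
-/

open Finset

namespace Real

theorem geom_mean_add_geom_mean_le {ι : Type*} [Fintype ι] [Nonempty ι] {a b : ι → ℝ}
    (ha : ∀ i, 0 ≤ a i) (hb : ∀ i, 0 ≤ b i) :
    (∏ i, a i) ^ (Fintype.card ι : ℝ)⁻¹ + (∏ i, b i) ^ (Fintype.card ι : ℝ)⁻¹ ≤
      (∏ i, (a i + b i)) ^ (Fintype.card ι : ℝ)⁻¹ := by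
  set w := (Fintype.card ι : ℝ)⁻¹
  have hw : ∑ _i : ι, w = 1 := by simp [w]
  by_cases hs : ∀ i, 0 < a i + b i
  · have ratio (c : ι → ℝ) (hc : ∀ i, 0 ≤ c i) :
        (∏ i, c i) ^ w / (∏ i, (a i + b i)) ^ w ≤ ∑ i, w * (c i / (a i + b i)) := by
      rw [← div_rpow (prod_nonneg fun i _ => hc i) (prod_nonneg fun i _ => (hs i).le),
        ← prod_div_distrib, ← finsetProd_rpow _ _ fun i _ => div_nonneg (hc i) (hs i).le]
      exact geom_mean_le_arith_mean_weighted _ _ _ (fun i _ => by positivity) hw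
        fun i _ => div_nonneg (hc i) (hs i).le
    have hsum := add_le_add (ratio a ha) (ratio b hb)
    rw [← add_div, ← sum_add_distrib,
      div_le_iff₀ (rpow_pos_of_pos (prod_pos fun i _ => hs i) _)] at hsum
    simpa only [← mul_add, ← add_div, div_self (hs _).ne', mul_one, hw, one_mul] using hsum
  · obtain ⟨i, hi⟩ := not_forall.mp hs
    have hai : a i = 0 := by linarith [ha i, hb i]
    have hbi : b i = 0 := by linarith [ha i, hb i]
    rw [prod_eq_zero (mem_univ i) hai, prod_eq_zero (mem_univ i) hbi,
      zero_rpow (by simp [w]), zero_add]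
    exact rpow_nonneg (prod_nonneg fun j _ => add_nonneg (ha j) (hb j)) _

end Real

namespace Matrix

variable {ι : Type*} [Fintype ι] [DecidableEq ι]

theorem IsHermitian.det_cfc {𝕜 : Type*} [RCLike 𝕜] {A : Matrix ι ι 𝕜} (hA : A.IsHermitian)
    (f : ℝ → ℝ) : (cfc f A).det = ∏ i, (f (hA.eigenvalues i) : 𝕜) := by
  rw [hA.cfc_eq]
  simp [IsHermitian.cfc, -Unitary.conjStarAlgAut_apply]

theorem PosSemidef.one_add_det_rpow_le [Nonempty ι] {M : Matrix ι ι ℝ} (hM : M.PosSemidef) :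
    1 + M.det ^ (Fintype.card ι : ℝ)⁻¹ ≤ (1 + M).det ^ (Fintype.card ι : ℝ)⁻¹ := by
  have hdet : M.det = ∏ i, hM.1.eigenvalues i := by
    simpa using hM.1.det_eq_prod_eigenvalues
  have hdet_one_add : (1 + M).det = ∏ i, (1 + hM.1.eigenvalues i) := by
    have hcfc : cfc (fun x : ℝ => 1 + x) M = 1 + M := by
      rw [cfc_const_add 1 (fun x => x) M (ha := hM.1.isSelfAdjoint),
        cfc_id' ℝ M hM.1.isSelfAdjoint, map_one]
    simpa [hcfc] using hM.1.det_cfc (1 + ·)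
  simpa [hdet, hdet_one_add] using
    Real.geom_mean_add_geom_mean_le (fun _ => zero_le_one) hM.eigenvalues_nonneg

open scoped MatrixOrder in
theorem PosDef.det_rpow_add_det_rpow_le [Nonempty ι] {A B : Matrix ι ι ℝ} (hA : A.PosDef)
    (hB : B.PosSemidef) :
    A.det ^ (Fintype.card ι : ℝ)⁻¹ + B.det ^ (Fintype.card ι : ℝ)⁻¹ ≤
      (A + B).det ^ (Fintype.card ι : ℝ)⁻¹ := by
  obtain ⟨C, rfl⟩ := CStarAlgebra.nonneg_iff_eq_star_mul_self.mp hA.posSemidef.nonneg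
  rw [star_eq_conjTranspose] at hA ⊢
  have hC : IsUnit C.det :=
    isUnit_of_mul_isUnit_right <| det_mul Cᴴ C ▸ (isUnit_iff_isUnit_det _).mp hA.isUnit
  set M := C⁻¹ᴴ * B * C⁻¹
  have hM : M.PosSemidef := hB.conjTranspose_mul_mul_same _
  have hBM : B = Cᴴ * M * C := by
    rw [show Cᴴ * M * C = (C⁻¹ * C)ᴴ * B * (C⁻¹ * C) by simp only [M, conjTranspose_mul, mul_assoc],
      nonsing_inv_mul _ hC, conjTranspose_one, one_mul, mul_one]
  have det_congr (X : Matrix ι ι ℝ) : (Cᴴ * X * C).det = (Cᴴ * C).det * X.det := by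
    simp only [det_mul]; ring
  have hd : 0 < (Cᴴ * C).det := hA.det_pos
  calc (Cᴴ * C).det ^ (Fintype.card ι : ℝ)⁻¹ + B.det ^ (Fintype.card ι : ℝ)⁻¹
      = (Cᴴ * C).det ^ (Fintype.card ι : ℝ)⁻¹ * (1 + M.det ^ (Fintype.card ι : ℝ)⁻¹) := by
        rw [hBM, det_congr, Real.mul_rpow hd.le hM.det_nonneg]; ring
    _ ≤ (Cᴴ * C).det ^ (Fintype.card ι : ℝ)⁻¹ * (1 + M).det ^ (Fintype.card ι : ℝ)⁻¹ := by
        gcongr; exact hM.one_add_det_rpow_le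
    _ = (Cᴴ * C + B).det ^ (Fintype.card ι : ℝ)⁻¹ := by
        rw [← Real.mul_rpow hd.le (PosSemidef.one.add hM).det_nonneg, ← det_congr, hBM,
          mul_add, add_mul, mul_one]

theorem PosSemidef.det_rpow_add_det_rpow_le [Nonempty ι] {A B : Matrix ι ι ℝ} (hA : A.PosSemidef)
    (hB : B.PosSemidef) :
    A.det ^ (Fintype.card ι : ℝ)⁻¹ + B.det ^ (Fintype.card ι : ℝ)⁻¹ ≤
      (A + B).det ^ (Fintype.card ι : ℝ)⁻¹ := by
  by_cases hAd : A.det = 0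
  · by_cases hBd : B.det = 0
    · rw [hAd, hBd, Real.zero_rpow (by simp), zero_add]
      exact Real.rpow_nonneg (hA.add hB).det_nonneg _
    · rw [add_comm, add_comm A]
      exact (hB.posDef_iff_det_ne_zero.mpr hBd).det_rpow_add_det_rpow_le hA
  · exact (hA.posDef_iff_det_ne_zero.mpr hAd).det_rpow_add_det_rpow_le hB

end Matrix

theorem brunn_minkowski_det {n : ℕ} (hn : 0 < n)
    (A B : Matrix (Fin n) (Fin n) ℝ)
    (hA : A.PosSemidef) (hB : B.PosSemidef) :
    A.det ^ ((n : ℝ)⁻¹) + B.det ^ ((n : ℝ)⁻¹) ≤ (A + B).det ^ ((n : ℝ)⁻¹) := by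
  have : Nonempty (Fin n) := Fin.pos_iff_nonempty.mp hn
  simpa using hA.det_rpow_add_det_rpow_le hB
end

section
/- Let M : ℝ³ → ℝ^{3×3} be a continuous map into symmetric positive semidefinite matrices, and let l₁, l₂, l₃ be linear forms on ℝ³, not all identically zero. If Σ_{i,j} lᵢ(y)lⱼ(y) cof(M(y))_{ij} = 0 for all y ∈ ℝ³, then det(cof(M(y))) = 0 for all y, and hence det(M(y)) = 0 for all y ∈ ℝ³. -/
/-!
Where `l(y) ≠ 0`, the vector `l(y)` is a nonzero isotropic vector of `cof (M y)`. If `M y` were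
invertible it would be positive definite, and so would be `adjugate (M y) = det (M y) • (M y)⁻¹`,
whose quadratic form is that of `cof (M y)`; hence `det (M y) = 0` there. The set where `l ≠ 0`
contains the complement of a proper hyperplane, which is dense, so continuity of `det ∘ M` gives
`det (M y) = 0` everywhere, and `det (cof T) = det T ^ 2`.
-/

open Matrix

/-- The cofactor matrix of a square matrix: the transpose of the adjugate,
so that `T * (cof T)ᵀ = det T • 1`. -/
noncomputable def cof {n : ℕ} (T : Matrix (Fin n) (Fin n) ℝ) : Matrix (Fin n) (Fin n) ℝ :=
  (Matrix.adjugate T)ᵀ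

theorem Submodule.dense_compl_of_ne_top {R M : Type*} [Ring R] [TopologicalSpace R]
    [TopologicalSpace M] [AddCommGroup M] [ContinuousAdd M] [Module R M] [ContinuousSMul R M]
    [Filter.NeBot (nhdsWithin (0 : R) {x | IsUnit x})] {p : Submodule R M} (hp : p ≠ ⊤) :
    Dense (p : Set M)ᶜ :=
  interior_eq_empty_iff_dense_compl.1 <|
    Set.not_nonempty_iff_eq_empty.1 fun h => hp (p.eq_top_of_nonempty_interior' h)

open scoped ComplexOrder in
theorem Matrix.PosDef.adjugate {𝕜 n : Type*} [RCLike 𝕜] [Fintype n] [DecidableEq n]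
    {A : Matrix n n 𝕜} (hA : A.PosDef) : A.adjugate.PosDef := by
  have hdet : A.det ≠ 0 := hA.det_pos.ne'
  have : A.adjugate = A.det • A⁻¹ := by
    rw [inv_def, Ring.inverse_eq_inv', smul_smul, mul_inv_cancel₀ hdet, one_smul]
  exact this ▸ hA.inv.smul hA.det_pos

theorem Matrix.dotProduct_mulVec_self_eq_sum {α n : Type*} [Fintype n] [CommSemiring α]
    (A : Matrix n n α) (v : n → α) : v ⬝ᵥ A *ᵥ v = ∑ i, ∑ j, v i * v j * A i j := by
  simp only [dotProduct, mulVec, Finset.mul_sum]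
  exact Finset.sum_congr rfl fun i _ => Finset.sum_congr rfl fun j _ => by ring

theorem det_eq_zero_of_dotProduct_cof_mulVec_eq_zero {n : ℕ} {A : Matrix (Fin n) (Fin n) ℝ}
    (hA : A.PosSemidef) {v : Fin n → ℝ} (hv : v ≠ 0) (h : v ⬝ᵥ cof A *ᵥ v = 0) : A.det = 0 := by
  by_contra hdet
  have hpos := (hA.posDef_iff_det_ne_zero.2 hdet).adjugate.dotProduct_mulVec_pos hv
  rw [star_trivial, ← dotProduct_transpose_mulVec] at hpos
  exact hpos.ne' h

theorem cof_degenerate_implies_det_zero_general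
    (M : (Fin 3 → ℝ) → Matrix (Fin 3) (Fin 3) ℝ)
    (hcont : Continuous M)
    (hpsd : ∀ y, (M y).PosSemidef)
    (l : Fin 3 → (Fin 3 → ℝ) →ₗ[ℝ] ℝ)
    (hl : ¬ ∀ i, l i = 0)
    (hzero : ∀ y : Fin 3 → ℝ, ∑ i, ∑ j, l i y * l j y * cof (M y) i j = 0) :
    (∀ y : Fin 3 → ℝ, (cof (M y)).det = 0) ∧ (∀ y : Fin 3 → ℝ, (M y).det = 0) := by
  obtain ⟨i₀, hi₀⟩ := not_forall.1 hl
  have hdet_off_ker : ∀ y ∈ (LinearMap.ker (l i₀) : Set (Fin 3 → ℝ))ᶜ, (M y).det = 0 :=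
    fun y hy => det_eq_zero_of_dotProduct_cof_mulVec_eq_zero (hpsd y) (v := fun i => l i y)
      (fun h => hy (congrFun h i₀)) (by rw [dotProduct_mulVec_self_eq_sum]; exact hzero y)
  have hdet : ∀ y, (M y).det = 0 := congrFun <|
    hcont.matrix_det.ext_on (Submodule.dense_compl_of_ne_top (LinearMap.ker_eq_top.not.2 hi₀))
      continuous_const hdet_off_ker
  refine ⟨fun y => ?_, hdet⟩
  rw [cof, det_transpose, det_adjugate, hdet y, Fintype.card_fin, zero_pow two_ne_zero]

theorem cof_degenerate_implies_det_zero
    (M : (Fin 3 → ℝ) → Matrix (Fin 3) (Fin 3) ℝ)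
    (hcont : Continuous M)
    (hpsd : ∀ y, (M y).PosSemidef) (hsymm : ∀ y, (M y).IsSymm)
    (l : Fin 3 → (Fin 3 → ℝ) →ₗ[ℝ] ℝ)
    (hl : ¬ ∀ i, l i = 0)
    (hzero : ∀ y : Fin 3 → ℝ, ∑ i, ∑ j, l i y * l j y * cof (M y) i j = 0) :
    (∀ y : Fin 3 → ℝ, (cof (M y)).det = 0) ∧ (∀ y : Fin 3 → ℝ, (M y).det = 0) :=
  cof_degenerate_implies_det_zero_general M hcont hpsd l hl hzero
end

section
/- If a₆ ∈ ℝ and β ≥ 0 satisfy |a₆ · y₁³y₂(y₂ − y₁)(y₂ + y₁)| ≤ 2β · y₁²y₂²(y₁ − y₂)² for all y₁, y₂ ∈ ℝ, then a₆ = 0. -/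
theorem coefficient_a6_vanishes (a₆ β : ℝ) (hβ : 0 ≤ β)
    (h : ∀ y₁ y₂ : ℝ,
      |a₆ * (y₁^3 * y₂ * (y₂ - y₁) * (y₂ + y₁))| ≤ 2 * β * (y₁^2 * y₂^2 * (y₁ - y₂)^2)) :
    a₆ = 0 := by
  by_contra ha
  have ha' : 0 < |a₆| := abs_pos.2 ha
  set ε : ℝ := min 1 (|a₆| / (4 * β + 1)) with hεdef
  have hβ1 : 0 < 4 * β + 1 := by linarith
  have hε : 0 < ε := lt_min one_pos (div_pos ha' hβ1)
  have hε1 : ε ≤ 1 := min_le_left _ _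
  have hε2 : ε ≤ |a₆| / (4 * β + 1) := min_le_right _ _
  have hε2' : ε * (4 * β + 1) ≤ |a₆| := by
    rw [← le_div_iff₀ hβ1] at *; exact hε2
  have key := h 1 (1 + ε)
  have hx : (0:ℝ) ≤ (1:ℝ)^3 * (1 + ε) * ((1 + ε) - 1) * ((1 + ε) + 1) := by nlinarith
  rw [abs_mul, abs_of_nonneg hx] at key
  nlinarith [mul_pos hε hε, mul_nonneg hβ (mul_pos hε hε).le, mul_le_mul_of_nonneg_left hε2' hβ]
end

section
/- For real numbers a, b, c, the degree-6 homogeneous polynomial D(y) = (y₁² + y₂² + y₃²)(a y₁² + b y₂² + c y₃²)² in three variables is extremal only if a = b = c = 0 (i.e., D ≡ 0). -/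
open MvPolynomial

/-- A polynomial is pointwise nonnegative on ℝⁿ. -/
def PolyNonneg {n : ℕ} (P : MvPolynomial (Fin n) ℝ) : Prop :=
  ∀ x : Fin n → ℝ, 0 ≤ eval x P

/-- A nonnegative homogeneous polynomial of degree 2m is extremal if whenever it is
written as a sum of two nonnegative homogeneous polynomials of degree 2m, each summand
is a scalar multiple of it. -/
def IsExtremalPoly {n : ℕ} (m : ℕ) (P : MvPolynomial (Fin n) ℝ) : Prop :=
  PolyNonneg P ∧
  ∀ P₁ P₂ : MvPolynomial (Fin n) ℝ,
    P₁.IsHomogeneous (2 * m) → P₂.IsHomogeneous (2 * m) →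
    PolyNonneg P₁ → PolyNonneg P₂ → P = P₁ + P₂ →
    (∃ c : ℝ, P₁ = c • P) ∧ (∃ c : ℝ, P₂ = c • P)

lemma aux_real (a b t : ℝ) (e1 : a ^ 2 = a ^ 2 * t) (e2 : (0:ℝ) = b ^ 2 * t)
    (e3 : a * b * 2 + a ^ 2 + b ^ 2 = a * b * t * 4 + a ^ 2 * t * 2 + b ^ 2 * t * 2) : a = 0 := by
  by_cases ha : a = 0
  · exact ha
  · exfalso
    have h : a ^ 2 * (t - 1) = 0 := by linear_combination -e1
    rcases mul_eq_zero.mp h with h' | h'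
    · exact ha (by nlinarith : a = 0)
    · have ht : t = 1 := by linarith
      subst ht
      have hb : b = 0 := by nlinarith
      subst hb
      have : a ^ 2 = 0 := by linarith
      exact ha (by nlinarith)

theorem extremal_forces_zero (a b c : ℝ)
    (hext : IsExtremalPoly 3
      ((X 0 ^ 2 + X 1 ^ 2 + X 2 ^ 2) *
        (C a * X 0 ^ 2 + C b * X 1 ^ 2 + C c * X 2 ^ 2) ^ 2 :
        MvPolynomial (Fin 3) ℝ)) :
    a = 0 ∧ b = 0 ∧ c = 0 := by
  set Q : MvPolynomial (Fin 3) ℝ := C a * X 0 ^ 2 + C b * X 1 ^ 2 + C c * X 2 ^ 2 with hQdef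
  have hQhom : Q.IsHomogeneous 2 := by
    refine IsHomogeneous.add (IsHomogeneous.add ?_ ?_) ?_ <;>
      exact (isHomogeneous_C _ _).mul ((isHomogeneous_X _ _).pow 2)
  have hXhom : ∀ i : Fin 3, ((X i ^ 2 : MvPolynomial (Fin 3) ℝ)).IsHomogeneous 2 :=
    fun i => (isHomogeneous_X _ _).pow 2
  have key : ∀ i : Fin 3, ∃ t : ℝ, ∀ x : Fin 3 → ℝ,
      eval x (X i ^ 2 * Q ^ 2) =
        t * eval x ((X 0 ^ 2 + X 1 ^ 2 + X 2 ^ 2) * Q ^ 2) := by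
    intro i
    fin_cases i
    all_goals simp only [Fin.isValue, Fin.mk_one]
    · obtain ⟨⟨t, ht⟩, -⟩ := hext.2 (X 0 ^ 2 * Q ^ 2) ((X 1 ^ 2 + X 2 ^ 2) * Q ^ 2)
        ((hXhom 0).mul (hQhom.pow 2))
        (((hXhom 1).add (hXhom 2)).mul (hQhom.pow 2))
        (fun x => by simp only [eval_mul, eval_add, eval_pow, eval_X, eval_C]; positivity)
        (fun x => by simp only [eval_mul, eval_add, eval_pow, eval_X, eval_C]; positivity)
        (by ring)
      refine ⟨t, fun x => ?_⟩
      show eval x (X 0 ^ 2 * Q ^ 2) = _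
      rw [ht, smul_eval]
    · obtain ⟨⟨t, ht⟩, -⟩ := hext.2 (X 1 ^ 2 * Q ^ 2) ((X 0 ^ 2 + X 2 ^ 2) * Q ^ 2)
        ((hXhom 1).mul (hQhom.pow 2))
        (((hXhom 0).add (hXhom 2)).mul (hQhom.pow 2))
        (fun x => by simp only [eval_mul, eval_add, eval_pow, eval_X, eval_C]; positivity)
        (fun x => by simp only [eval_mul, eval_add, eval_pow, eval_X, eval_C]; positivity)
        (by ring)
      refine ⟨t, fun x => ?_⟩
      show eval x (X 1 ^ 2 * Q ^ 2) = _
      rw [ht, smul_eval]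
    · obtain ⟨⟨t, ht⟩, -⟩ := hext.2 (X 2 ^ 2 * Q ^ 2) ((X 0 ^ 2 + X 1 ^ 2) * Q ^ 2)
        ((hXhom 2).mul (hQhom.pow 2))
        (((hXhom 0).add (hXhom 1)).mul (hQhom.pow 2))
        (fun x => by simp only [eval_mul, eval_add, eval_pow, eval_X, eval_C]; positivity)
        (fun x => by simp only [eval_mul, eval_add, eval_pow, eval_X, eval_C]; positivity)
        (by ring)
      refine ⟨t, fun x => ?_⟩
      show eval x (X 2 ^ 2 * Q ^ 2) = _
      rw [ht, smul_eval]
  refine ⟨?_, ?_, ?_⟩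
  · obtain ⟨t, H⟩ := key 0
    have e1 := H ![1,0,0]
    have e2 := H ![0,1,0]
    have e3 := H ![1,1,0]
    simp only [hQdef, eval_mul, eval_add, eval_pow, eval_X, eval_C, Matrix.cons_val_zero,
      Matrix.cons_val_one, Matrix.head_cons, Matrix.cons_val_two, Matrix.tail_cons] at e1 e2 e3
    exact aux_real a b t (by linear_combination e1) (by linear_combination e2)
      (by linear_combination e3)
  · obtain ⟨t, H⟩ := key 1
    have e1 := H ![0,1,0]
    have e2 := H ![1,0,0]
    have e3 := H ![1,1,0]
    simp only [hQdef, eval_mul, eval_add, eval_pow, eval_X, eval_C, Matrix.cons_val_zero,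
      Matrix.cons_val_one, Matrix.head_cons, Matrix.cons_val_two, Matrix.tail_cons] at e1 e2 e3
    exact aux_real b a t (by linear_combination e1) (by linear_combination e2)
      (by linear_combination e3)
  · obtain ⟨t, H⟩ := key 2
    have e1 := H ![0,0,1]
    have e2 := H ![1,0,0]
    have e3 := H ![1,0,1]
    simp only [hQdef, eval_mul, eval_add, eval_pow, eval_X, eval_C, Matrix.cons_val_zero,
      Matrix.cons_val_one, Matrix.head_cons, Matrix.cons_val_two, Matrix.tail_cons] at e1 e2 e3
    exact aux_real c a t (by linear_combination e1) (by linear_combination e2)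
      (by linear_combination e3)
end
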